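/- For all real numbers a, b with −1 ≤ a ≤ b ≤ 1, the proportion (1/n)·#{k ∈ ℕ : 1 ≤ k ≤ n and a ≤ sin(2π{√k}) ≤ b} tends to (arcsin(b) − arcsin(a))/π as n → ∞. -/

import Mathlib

/-!
On the block `M² ≤ k < (M + 1)²` we have `{√k} = √k - M`, so the `k` there with `{√k} ∈ [α, β]`
are the integers in `[(M + α)², (M + β)²]`, about `(β - α)(2M + 1)` of them. Summing over blocks
shows that `{√k}` is equidistributed in `[0, 1)`, with error `O(√n)`.

For `t ∈ [0, 1)`, `sin (2πt) ∈ [a, b]` exactly when `t` lies modulo 1 in one of the arcs `[u, v]`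
or `[1/2 - v, 1/2 - u]`, where `u = arcsin a / 2π` and `v = arcsin b / 2π`. Each has length
`v - u`, and they can only meet at `1/4` or `3/4`, values that `{√k}` never takes because `√k`
is an integer or irrational.
-/

open Filter Topology Real Finset

def HasNaturalDensity (P : ℕ → Prop) [DecidablePred P] (d : ℝ) : Prop :=
  Tendsto (fun n : ℕ => (#{k ∈ Icc 1 n | P k} : ℝ) / n) atTop (𝓝 d)

namespace HasNaturalDensity

variable {P Q : ℕ → Prop} [DecidablePred P] [DecidablePred Q] {d e : ℝ}

theorem congr (h : HasNaturalDensity P d) (hPQ : ∀ k, P k ↔ Q k) : HasNaturalDensity Q d := by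
  simpa only [HasNaturalDensity, filter_congr fun k _ => hPQ k] using h

theorem or (hP : HasNaturalDensity P d) (hQ : HasNaturalDensity Q e)
    (hPQ : ∀ k, ¬(P k ∧ Q k)) : HasNaturalDensity (fun k => P k ∨ Q k) (d + e) := by
  refine (hP.add hQ).congr fun n => ?_
  have hdisj : Disjoint {k ∈ Icc 1 n | P k} {k ∈ Icc 1 n | Q k} :=
    disjoint_filter.2 fun k _ hP hQ => hPQ k ⟨hP, hQ⟩
  rw [filter_or, card_union_of_disjoint hdisj, Nat.cast_add, add_div]

theorem of_abs_card_sq_sub_le (C : ℝ)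
    (h : ∀ N : ℕ, |(#{k ∈ Icc 1 (N ^ 2) | P k} : ℝ) - d * N ^ 2| ≤ C * (N + 1)) :
    HasNaturalDensity P d := by
  set c : ℕ → ℝ := fun n => #{k ∈ Icc 1 n | P k}
  have hc : Monotone c := fun m n hmn => by
    simp only [c]; gcongr
  have hsqrt : Tendsto (fun n : ℕ => (Nat.sqrt n : ℝ)) atTop atTop :=
    tendsto_natCast_atTop_atTop.comp <|
      tendsto_atTop_atTop.2 fun N => ⟨N ^ 2, fun n hn => Nat.le_sqrt'.2 hn⟩
  have key : ∀ n, 1 ≤ n → |c n / n - d| ≤ 3 * (C + |d|) / Nat.sqrt n := by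
    intro n hn
    set N := Nat.sqrt n
    have hN : 1 ≤ N := Nat.sqrt_pos.2 hn
    have hlo : N ^ 2 ≤ n := Nat.sqrt_le' n
    have hhi : n < (N + 1) ^ 2 := Nat.lt_succ_sqrt' n
    have hNn : (N : ℝ) ^ 2 ≤ n := by exact_mod_cast hlo
    have hnN : (n : ℝ) + 1 ≤ ((N : ℝ) + 1) ^ 2 := by exact_mod_cast hhi
    have h1 := abs_le.1 (h N)
    have h2 := abs_le.1 (h (N + 1))
    have hc1 : c (N ^ 2) ≤ c n := hc hlo
    have hc2 : c n ≤ c ((N + 1) ^ 2) := hc hhi.le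
    push_cast at h2
    have hNpos : (1 : ℝ) ≤ N := by exact_mod_cast hN
    have hC : 0 ≤ C := by simpa using (abs_nonneg _).trans (h 0)
    have herr : |c n - n * d| ≤ 3 * (C + |d|) * N := by
      rw [abs_le]; constructor <;> nlinarith [le_abs_self d, neg_abs_le d, abs_nonneg d]
    have hnpos : (0 : ℝ) < n := by positivity
    rw [div_sub' hnpos.ne', abs_div, abs_of_pos hnpos, div_le_div_iff₀ hnpos (by positivity)]
    calc |c n - n * d| * N ≤ 3 * (C + |d|) * N * N := by gcongr
      _ = 3 * (C + |d|) * N ^ 2 := by ring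
      _ ≤ 3 * (C + |d|) * n := by gcongr
  rw [HasNaturalDensity, tendsto_iff_dist_tendsto_zero]
  refine squeeze_zero' (Eventually.of_forall fun n => dist_nonneg) ?_
    ((tendsto_const_nhds (x := 3 * (C + |d|))).div_atTop hsqrt)
  filter_upwards [eventually_ge_atTop 1] with n hn
  exact key n hn

end HasNaturalDensity

theorem Int.fract_sqrt_natCast_of_sq_le_of_lt_sq {M k : ℕ} (h₁ : M ^ 2 ≤ k)
    (h₂ : k < (M + 1) ^ 2) : Int.fract √(k : ℝ) = √k - M := by
  rw [Int.fract, Real.floor_real_sqrt_eq_nat_sqrt, ← Nat.eq_sqrt'.2 ⟨h₁, h₂⟩, Int.cast_natCast]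

theorem abs_card_Icc_ceil_floor_sub_le {x y : ℝ} (hx : 0 ≤ x) (hxy : x ≤ y) :
    |(#(Icc ⌈x⌉₊ ⌊y⌋₊) : ℝ) - (y - x)| ≤ 1 := by
  have hceil := Nat.ceil_lt_add_one hx
  have hfloor := Nat.lt_floor_add_one y
  have hle : ⌈x⌉₊ ≤ ⌊y⌋₊ + 1 := by
    have : (⌈x⌉₊ : ℝ) < ⌊y⌋₊ + 2 := by linarith
    exact_mod_cast (Nat.lt_add_one_iff.1 (by exact_mod_cast this))
  rw [Nat.card_Icc, Nat.cast_sub hle, abs_le]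
  push_cast
  constructor <;> linarith [Nat.le_ceil x, Nat.floor_le (hx.trans hxy)]

variable {α β : ℝ}

theorem filter_fract_sqrt_mem_Icc_Ico_sq_eq (hα : 0 ≤ α) (hαβ : α ≤ β) (hβ : β ≤ 1) (M : ℕ) :
    {k ∈ Ico (M ^ 2) ((M + 1) ^ 2) | α ≤ Int.fract √(k : ℕ) ∧ Int.fract √(k : ℕ) ≤ β} =
      (Icc ⌈((M : ℝ) + α) ^ 2⌉₊ ⌊((M : ℝ) + β) ^ 2⌋₊).erase ((M + 1) ^ 2) := by
  have hMα : 0 ≤ (M : ℝ) + α := by positivity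
  have hMβ : 0 ≤ (M : ℝ) + β := by linarith
  ext k
  simp only [mem_filter, mem_Ico, mem_erase, mem_Icc, Nat.ceil_le, Nat.le_floor_iff (sq_nonneg _)]
  constructor
  · rintro ⟨⟨h₁, h₂⟩, hα', hβ'⟩
    rw [Int.fract_sqrt_natCast_of_sq_le_of_lt_sq h₁ h₂] at hα' hβ'
    refine ⟨h₂.ne, (Real.le_sqrt hMα (Nat.cast_nonneg k)).1 (by linarith), ?_⟩
    exact (Real.sqrt_le_left hMβ).1 (by linarith)
  · rintro ⟨hne, hα', hβ'⟩
    have h₁ : M ^ 2 ≤ k := by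
      have : (M : ℝ) ^ 2 ≤ k := le_trans (by gcongr; linarith) hα'
      exact_mod_cast this
    have h₂ : k < (M + 1) ^ 2 := by
      have : (k : ℝ) ≤ ((M : ℝ) + 1) ^ 2 := hβ'.trans (by gcongr)
      exact lt_of_le_of_ne (by exact_mod_cast this) hne
    rw [Int.fract_sqrt_natCast_of_sq_le_of_lt_sq h₁ h₂]
    refine ⟨⟨h₁, h₂⟩, ?_, ?_⟩
    · linarith [Real.le_sqrt_of_sq_le hα']
    · linarith [(Real.sqrt_le_left hMβ).2 hβ']

theorem abs_card_filter_fract_sqrt_mem_Icc_Ico_sq_sub_le (hα : 0 ≤ α) (hαβ : α ≤ β) (hβ : β ≤ 1)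
    (M : ℕ) :
    |(#{k ∈ Ico (M ^ 2) ((M + 1) ^ 2) | α ≤ Int.fract √(k : ℕ) ∧ Int.fract √(k : ℕ) ≤ β} : ℝ) -
      (β - α) * (2 * M + 1)| ≤ 3 := by
  rw [filter_fract_sqrt_mem_Icc_Ico_sq_eq hα hαβ hβ]
  set s := Icc ⌈((M : ℝ) + α) ^ 2⌉₊ ⌊((M : ℝ) + β) ^ 2⌋₊
  have hs := abs_le.1 <| abs_card_Icc_ceil_floor_sub_le (x := ((M : ℝ) + α) ^ 2)
    (y := ((M : ℝ) + β) ^ 2) (by positivity) (by gcongr)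
  have h₁ : (#s : ℝ) - 1 ≤ #(s.erase ((M + 1) ^ 2)) := by
    have : #s ≤ #(s.erase ((M + 1) ^ 2)) + 1 := by
      have := pred_card_le_card_erase (s := s) (a := (M + 1) ^ 2)
      omega
    linarith [show (#s : ℝ) ≤ #(s.erase ((M + 1) ^ 2)) + 1 by exact_mod_cast this]
  have h₂ : (#(s.erase ((M + 1) ^ 2)) : ℝ) ≤ #s := by exact_mod_cast card_erase_le
  rw [abs_le]
  constructor <;> nlinarith

theorem card_filter_range_add_card_filter_Ico (P : ℕ → Prop) [DecidablePred P] {m n : ℕ}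
    (h : m ≤ n) : #{k ∈ range m | P k} + #{k ∈ Ico m n | P k} = #{k ∈ range n | P k} := by
  rw [range_eq_Ico, range_eq_Ico, ← Ico_union_Ico_eq_Ico (Nat.zero_le m) h, filter_union,
    card_union_of_disjoint (disjoint_filter_filter (Ico_disjoint_Ico_consecutive _ _ _))]

theorem abs_card_filter_Icc_one_sub_card_filter_range_le (P : ℕ → Prop) [DecidablePred P]
    (n : ℕ) : |(#{k ∈ Icc 1 n | P k} : ℝ) - #{k ∈ range n | P k}| ≤ 1 := by
  have h₁ : {k ∈ Icc 1 n | P k} ⊆ insert n {k ∈ range n | P k} := by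
    intro k; simp only [mem_filter, mem_Icc, mem_insert, mem_range]; grind
  have h₂ : {k ∈ range n | P k} ⊆ insert 0 {k ∈ Icc 1 n | P k} := by
    intro k; simp only [mem_filter, mem_Icc, mem_insert, mem_range]; grind
  have c₁ : (#{k ∈ Icc 1 n | P k} : ℝ) ≤ #{k ∈ range n | P k} + 1 := by
    exact_mod_cast (card_le_card h₁).trans (card_insert_le _ _)
  have c₂ : (#{k ∈ range n | P k} : ℝ) ≤ #{k ∈ Icc 1 n | P k} + 1 := by
    exact_mod_cast (card_le_card h₂).trans (card_insert_le _ _)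
  rw [abs_le]
  constructor <;> linarith

theorem abs_card_filter_fract_sqrt_mem_Icc_range_sq_sub_le (hα : 0 ≤ α) (hαβ : α ≤ β)
    (hβ : β ≤ 1) (N : ℕ) :
    |(#{k ∈ range (N ^ 2) | α ≤ Int.fract √(k : ℕ) ∧ Int.fract √(k : ℕ) ≤ β} : ℝ) -
      (β - α) * N ^ 2| ≤ 3 * N := by
  induction N with
  | zero => simp
  | succ N ih =>
    rw [← card_filter_range_add_card_filter_Ico _ (Nat.pow_le_pow_left N.le_succ 2)]
    have hblock := abs_card_filter_fract_sqrt_mem_Icc_Ico_sq_sub_le hα hαβ hβ N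
    push_cast
    rw [abs_le] at ih hblock ⊢
    constructor <;> linarith [ih.1, ih.2, hblock.1, hblock.2]

theorem hasNaturalDensity_fract_sqrt_mem_Icc (hα : 0 ≤ α) (hαβ : α ≤ β) (hβ : β ≤ 1) :
    HasNaturalDensity (fun k => α ≤ Int.fract √(k : ℕ) ∧ Int.fract √(k : ℕ) ≤ β) (β - α) := by
  refine HasNaturalDensity.of_abs_card_sq_sub_le 3 fun N => ?_
  have h₁ := abs_card_filter_Icc_one_sub_card_filter_range_le
    (fun k : ℕ => α ≤ Int.fract √(k : ℕ) ∧ Int.fract √(k : ℕ) ≤ β) (N ^ 2)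
  have h₂ := abs_card_filter_fract_sqrt_mem_Icc_range_sq_sub_le hα hαβ hβ N
  rw [abs_le] at h₁ h₂ ⊢
  constructor <;> linarith [h₁.1, h₁.2, h₂.1, h₂.2]

theorem hasNaturalDensity_fract_sqrt_mem_Icc_or_mem_Icc_add_one {u v : ℝ} (hu : -1 ≤ u)
    (huv : u ≤ v) (hvu : v < u + 1) (hv : v ≤ 1) :
    HasNaturalDensity (fun k => (u ≤ Int.fract √(k : ℕ) ∧ Int.fract √(k : ℕ) ≤ v) ∨
      (u + 1 ≤ Int.fract √(k : ℕ) ∧ Int.fract √(k : ℕ) ≤ v + 1)) (v - u) := by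
  have hf₀ (k : ℕ) := Int.fract_nonneg √(k : ℝ)
  have hf₁ (k : ℕ) := Int.fract_lt_one √(k : ℝ)
  rcases le_or_gt 0 u with h₀ | h₀
  · refine (hasNaturalDensity_fract_sqrt_mem_Icc h₀ huv hv).congr fun k => ?_
    grind
  rcases le_or_gt 0 v with h₁ | h₁
  · have := (hasNaturalDensity_fract_sqrt_mem_Icc le_rfl h₁ hv).or
      (hasNaturalDensity_fract_sqrt_mem_Icc (by linarith : 0 ≤ u + 1) (by linarith) le_rfl)
      (fun k => by grind)
    rw [show v - 0 + (1 - (u + 1)) = v - u by ring] at this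
    exact this.congr fun k => by grind
  · have := hasNaturalDensity_fract_sqrt_mem_Icc (by linarith : 0 ≤ u + 1)
      (by linarith : u + 1 ≤ v + 1) (by linarith)
    rw [show v + 1 - (u + 1) = v - u by ring] at this
    exact this.congr fun k => by grind

theorem Int.fract_sqrt_natCast_ne_ratCast {q : ℚ} (hq : q ≠ 0) (k : ℕ) :
    Int.fract √(k : ℝ) ≠ q := by
  by_cases hk : IsSquare k
  · obtain ⟨r, rfl⟩ := hk
    rw [Nat.cast_mul, Real.sqrt_mul_self (Nat.cast_nonneg r), Int.fract_natCast]
    exact_mod_cast hq.symm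
  · exact ((irrational_sqrt_natCast_iff.2 hk).sub_intCast _).ne_rat q

theorem arcsin_div_two_pi_mem_Icc (x : ℝ) : arcsin x / (2 * π) ∈ Set.Icc (-(1 / 4)) (1 / 4) := by
  constructor
  · rw [le_div_iff₀ (by positivity)]; linarith [neg_pi_div_two_le_arcsin x]
  · rw [div_le_iff₀ (by positivity)]; linarith [arcsin_le_pi_div_two x]

variable {a b : ℝ}

theorem sin_two_pi_mul_mem_Icc_iff_of_abs_le (ha : a ∈ Set.Icc (-1) 1) (hb : b ∈ Set.Icc (-1) 1)
    {s : ℝ} (hs : |s| ≤ 1 / 4) :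
    (a ≤ sin (2 * π * s) ∧ sin (2 * π * s) ≤ b) ↔
      (arcsin a / (2 * π) ≤ s ∧ s ≤ arcsin b / (2 * π)) := by
  have hs' : 2 * π * s ∈ Set.Icc (-(π / 2)) (π / 2) := by
    obtain ⟨h₁, h₂⟩ := abs_le.1 hs
    constructor <;> nlinarith [pi_pos]
  rw [div_le_iff₀ (by positivity), le_div_iff₀ (by positivity), mul_comm s,
    arcsin_le_iff_le_sin ha hs', le_arcsin_iff_sin_le hs' hb]

theorem sin_two_pi_mul_mem_Icc_iff (ha : a ∈ Set.Icc (-1) 1) (hb : b ∈ Set.Icc (-1) 1) {t : ℝ}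
    (ht₀ : 0 ≤ t) (ht₁ : t < 1) :
    (a ≤ sin (2 * π * t) ∧ sin (2 * π * t) ≤ b) ↔
      ((arcsin a / (2 * π) ≤ t ∧ t ≤ arcsin b / (2 * π)) ∨
        (arcsin a / (2 * π) + 1 ≤ t ∧ t ≤ arcsin b / (2 * π) + 1)) ∨
      (1 / 2 - arcsin b / (2 * π) ≤ t ∧ t ≤ 1 / 2 - arcsin a / (2 * π)) := by
  have key (s : ℝ) (h₁ : -(1 / 4) ≤ s) (h₂ : s ≤ 1 / 4) :=
    sin_two_pi_mul_mem_Icc_iff_of_abs_le ha hb (abs_le.2 ⟨h₁, h₂⟩)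
  have e₁ : sin (2 * π * (t - 1)) = sin (2 * π * t) := by
    rw [mul_sub, mul_one, sin_sub_two_pi]
  have e₂ : sin (2 * π * (1 / 2 - t)) = sin (2 * π * t) := by
    rw [show 2 * π * (1 / 2 - t) = π - 2 * π * t by ring, sin_pi_sub]
  obtain ⟨hu₁, hu₂⟩ := arcsin_div_two_pi_mem_Icc a
  obtain ⟨hv₁, hv₂⟩ := arcsin_div_two_pi_mem_Icc b
  constructor
  · intro h
    rcases le_or_gt t (1 / 4) with h₁ | h₁
    · exact .inl (.inl ((key t (by linarith) h₁).1 h))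
    rcases le_or_gt t (3 / 4) with h₂ | h₂
    · have := (key (1 / 2 - t) (by linarith) (by linarith)).1 (e₂ ▸ h)
      exact .inr ⟨by linarith, by linarith⟩
    · have := (key (t - 1) (by linarith) (by linarith)).1 (e₁ ▸ h)
      exact .inl (.inr ⟨by linarith, by linarith⟩)
  · rintro ((h | h) | h)
    · exact (key t (by linarith) (by linarith)).2 h
    · rw [← e₁]; exact (key (t - 1) (by linarith) (by linarith)).2 ⟨by linarith, by linarith⟩
    · rw [← e₂]; exact (key (1 / 2 - t) (by linarith) (by linarith)).2 ⟨by linarith, by linarith⟩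

/-- For `−1 ≤ a ≤ b ≤ 1`, the proportion of `k ≤ n` with
`a ≤ sin(2π{√k}) ≤ b` tends to `(arcsin b − arcsin a)/π`. -/
theorem proportion_sin_two_pi_fract_sqrt
    (a b : ℝ) (ha : -1 ≤ a) (hab : a ≤ b) (hb : b ≤ 1) :
    Tendsto
      (fun n : ℕ =>
        (((Finset.Icc 1 n).filter fun k : ℕ =>
            a ≤ Real.sin (2 * π * Int.fract (Real.sqrt k)) ∧
            Real.sin (2 * π * Int.fract (Real.sqrt k)) ≤ b).card : ℝ) / n)
      atTop (𝓝 ((Real.arcsin b - Real.arcsin a) / π)) := by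
  set u := arcsin a / (2 * π)
  set v := arcsin b / (2 * π)
  obtain ⟨hu₁, hu₂⟩ := arcsin_div_two_pi_mem_Icc a
  obtain ⟨hv₁, hv₂⟩ := arcsin_div_two_pi_mem_Icc b
  have huv : u ≤ v := div_le_div_of_nonneg_right (monotone_arcsin hab) (by positivity)
  have h₁ := hasNaturalDensity_fract_sqrt_mem_Icc_or_mem_Icc_add_one (by linarith) huv
    (by linarith) (by linarith)
  have h₂ := hasNaturalDensity_fract_sqrt_mem_Icc (α := 1 / 2 - v) (β := 1 / 2 - u)
    (by linarith) (by linarith) (by linarith)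
  have hdisj (k : ℕ) : Int.fract √(k : ℝ) ≠ 1 / 4 ∧ Int.fract √(k : ℝ) ≠ 3 / 4 :=
    ⟨by simpa using Int.fract_sqrt_natCast_ne_ratCast (q := 1 / 4) (by norm_num) k,
      by simpa using Int.fract_sqrt_natCast_ne_ratCast (q := 3 / 4) (by norm_num) k⟩
  have h := (h₁.or h₂ fun k => by grind [hdisj k]).congr fun k =>
    (sin_two_pi_mul_mem_Icc_iff ⟨ha, hab.trans hb⟩ ⟨ha.trans hab, hb⟩ (Int.fract_nonneg _)
      (Int.fract_lt_one _)).symm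
  rwa [show v - u + (1 / 2 - u - (1 / 2 - v)) = (arcsin b - arcsin a) / π by
    simp only [u, v]; field_simp; ring] at h
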